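/- arXiv:2301.09435 — 2 statements merged into one kernel-verified Lean document; each statement's English description precedes it below -/
import Mathlib

section
/- Let P be a forcing notion (preorder with maximal element) and M a set with P ∩ M given. A condition p ∈ P is (M,P)-strongly generic (every dense open subset of P ∩ M is predense below p) if and only if: for every q ≤ p there exists q|_M ∈ P ∩ M such that every r ∈ P ∩ M with r ≤ q|_M is compatible with q. -/
/-- `a` and `b` are compatible: they have a common lower bound. -/
def Compat {P : Type*} [Preorder P] (a b : P) : Prop := ∃ c, c ≤ a ∧ c ≤ b

/-- `D` is a dense open subset of `P ∩ M`. -/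
def DenseOpenIn {P : Type*} [Preorder P] (M : Set P) (D : Set P) : Prop :=
  D ⊆ M ∧ (∀ s ∈ M, ∃ t ∈ D, t ≤ s) ∧ (∀ t ∈ D, ∀ r ∈ M, r ≤ t → r ∈ D)

/-- `D` is predense below `p`. -/
def PredenseBelow {P : Type*} [Preorder P] (p : P) (D : Set P) : Prop :=
  ∀ q ≤ p, ∃ d ∈ D, Compat d q

/-- `p` is an `(M, P)`-strongly generic condition. -/
def StronglyGeneric {P : Type*} [Preorder P] (M : Set P) (p : P) : Prop :=
  ∀ D : Set P, DenseOpenIn M D → PredenseBelow p D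

/-- Lemma 2.2: `p` is `(M,P)`-strongly generic iff for every `q ≤ p`
there is `q|_M ∈ P ∩ M` such that every `r ∈ P ∩ M` with `r ≤ q|_M` is
compatible with `q`. -/
theorem stmt_6 {P : Type*} [Preorder P] [OrderTop P] (M : Set P) (p : P) :
    StronglyGeneric M p ↔
      ∀ q ≤ p, ∃ qM ∈ M, ∀ r ∈ M, r ≤ qM → Compat r q := by
  constructor
  · intro hsg q hq
    by_contra h
    push_neg at h
    set D : Set P := {r | r ∈ M ∧ ¬ Compat r q} with hD
    have hdo : DenseOpenIn M D := by
      refine ⟨fun r hr => hr.1, fun s hs => ?_, fun t ht r hr hrt => ?_⟩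
      · obtain ⟨r, hrM, hrs, hrc⟩ := h s hs
        exact ⟨r, ⟨hrM, hrc⟩, hrs⟩
      · refine ⟨hr, fun ⟨c, hc1, hc2⟩ => ht.2 ⟨c, hc1.trans hrt, hc2⟩⟩
    obtain ⟨d, hd, hcd⟩ := hsg D hdo q hq
    exact hd.2 hcd
  · intro h D hdo q hq
    obtain ⟨qM, hqM, hall⟩ := h q hq
    obtain ⟨t, ht, hle⟩ := hdo.2.1 qM hqM
    exact ⟨t, ht, hall t (hdo.1 ht) hle⟩
end

section
/- Let p be a finite partial function f_p : ω₂ ⇀ 2 and let X ⊆ ω₂ be infinite. Suppose Φ is a finite set of partial injections on ω₂ (the maps φ_{N,N'}). Then there exist α, β ∈ X \ dom(f_p) with α ≠ β such that φ(α) ≠ β and φ(β) ≠ α for all φ ∈ Φ, and moreover the extension f_q = f_p ∪ {(φ(α),1) : φ ∈ Φ, α ∈ dom φ} ∪ {(α,1)} ∪ {(φ(β),0) : φ ∈ Φ, β ∈ dom φ} ∪ {(β,0)} is a well-defined partial function provided the family Φ ∪ {id} has pairwise disjoint images on {α} and on {β} or agrees where overlapping, assuming Φ is closed under composition and inverses and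 each φ ∈ Φ fixes dom(f_p) setwise compatibly with f_p. -/
/-- The domain of a partial function coded with `Option`. -/
def pdom {β : Type*} (f : Ordinal → Option β) : Set Ordinal := {x | f x ≠ none}

/-- density argument.  Given a finite partial function
`fp : ω₂ ⇀ 2`, an infinite `X ⊆ ω₂`, and a finite set `Φ` of partial injections
on ω₂ closed under composition and inverse and coherent with `fp`, there are
`α ≠ β` in `X` off `dom fp` with `φ(α) ≠ β`, `φ(β) ≠ α` for `φ ∈ Φ`, and the
extension `fq` of `fp` sending the `Φ`-orbit of `α` to `1` and that of `β` to `0`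
is a well-defined finite partial function, still `Φ`-coherent. -/
theorem stmt_9
    (fp : Ordinal → Option (Fin 2)) (hfp : (pdom fp).Finite)
    (X : Set Ordinal) (hX : X.Infinite) (hXsub : ∀ x ∈ X, x < (Cardinal.aleph 2).ord)
    (Φ : Set (Ordinal → Option Ordinal)) (hΦfin : Φ.Finite)
    (hinj : ∀ φ ∈ Φ, ∀ x y a, φ x = some a → φ y = some a → x = y)
    (hcomp : ∀ φ ∈ Φ, ∀ ψ ∈ Φ, ∃ χ ∈ Φ, ∀ x y z, φ x = some y → ψ y = some z → χ x = some z)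
    (hinv : ∀ φ ∈ Φ, ∃ ψ ∈ Φ, ∀ x y, φ x = some y ↔ ψ y = some x)
    (hcoh : ∀ φ ∈ Φ, ∀ γ δ, fp γ ≠ none → φ γ = some δ → fp δ = fp γ) :
    ∃ α β : Ordinal, α ∈ X ∧ β ∈ X ∧ fp α = none ∧ fp β = none ∧ α ≠ β ∧
      (∀ φ ∈ Φ, φ α ≠ some β ∧ φ β ≠ some α) ∧
      ∃ fq : Ordinal → Option (Fin 2),
        (pdom fq).Finite ∧
        (∀ x, fp x ≠ none → fq x = fp x) ∧
        fq α = some 1 ∧ fq β = some 0 ∧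
        (∀ x, fq x ≠ none ↔
          (fp x ≠ none ∨ x = α ∨ x = β ∨ ∃ φ ∈ Φ, φ α = some x ∨ φ β = some x)) ∧
        (∀ φ ∈ Φ, ∀ γ δ, fq γ ≠ none → φ γ = some δ → fq δ = fq γ) := by
  classical
  -- choose α in X off dom fp
  obtain ⟨α, hαX, hαfp⟩ : ∃ α, α ∈ X ∧ fp α = none := by
    obtain ⟨α, hα⟩ := (hX.diff hfp).nonempty
    exact ⟨α, hα.1, not_ne_iff.mp hα.2⟩
  -- finite bad sets
  have hfinIm : ∀ z : Ordinal, (⋃ φ ∈ Φ, {x | φ z = some x}).Finite := by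
    intro z
    refine Set.Finite.biUnion hΦfin fun φ _ => Set.Subsingleton.finite ?_
    intro x hx y hy
    exact Option.some.inj ((Set.mem_setOf_eq ▸ hx).symm.trans hy)
  have hfinPre : (⋃ φ ∈ Φ, {x | φ x = some α}).Finite := by
    refine Set.Finite.biUnion hΦfin fun φ hφ => Set.Subsingleton.finite ?_
    intro x hx y hy
    exact hinj φ hφ x y α hx hy
  -- choose β
  obtain ⟨β, hβ⟩ := (hX.diff (((hfp.union (Set.finite_singleton α)).union
    (hfinIm α)).union hfinPre)).nonempty
  obtain ⟨hβX, hβbad⟩ := hβ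
  simp only [Set.mem_union, not_or] at hβbad
  obtain ⟨⟨⟨hβfp', hβα⟩, hβim⟩, hβpre⟩ := hβbad
  have hβfp : fp β = none := not_ne_iff.mp hβfp'
  have hne : α ≠ β := fun h => hβα (h ▸ rfl)
  have hnoim : ∀ φ ∈ Φ, φ α ≠ some β := by
    intro φ hφ h
    exact hβim (Set.mem_biUnion hφ h)
  have hnopre : ∀ φ ∈ Φ, φ β ≠ some α := by
    intro φ hφ h
    exact hβpre (Set.mem_biUnion hφ h)
  -- orbits
  set Oa : Ordinal → Prop := fun x => x = α ∨ ∃ φ ∈ Φ, φ α = some x with hOa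
  set Ob : Ordinal → Prop := fun x => x = β ∨ ∃ φ ∈ Φ, φ β = some x with hOb
  have K1a : ∀ x, Oa x → fp x = none := by
    rintro x (rfl | ⟨φ, hφ, hφx⟩)
    · exact hαfp
    obtain ⟨ψ, hψ, hiff⟩ := hinv φ hφ
    by_contra h
    exact h ((hcoh ψ hψ x α h ((hiff α x).mp hφx)).symm.trans hαfp)
  have K1b : ∀ x, Ob x → fp x = none := by
    rintro x (rfl | ⟨φ, hφ, hφx⟩)
    · exact hβfp
    obtain ⟨ψ, hψ, hiff⟩ := hinv φ hφ
    by_contra h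
    exact h ((hcoh ψ hψ x β h ((hiff β x).mp hφx)).symm.trans hβfp)
  have K3a : ∀ φ ∈ Φ, ∀ γ δ, Oa γ → φ γ = some δ → Oa δ := by
    rintro φ hφ γ δ (rfl | ⟨ψ, hψ, hψγ⟩) h
    · exact Or.inr ⟨φ, hφ, h⟩
    obtain ⟨χ, hχ, hχprop⟩ := hcomp ψ hψ φ hφ
    exact Or.inr ⟨χ, hχ, hχprop α γ δ hψγ h⟩
  have K3b : ∀ φ ∈ Φ, ∀ γ δ, Ob γ → φ γ = some δ → Ob δ := by
    rintro φ hφ γ δ (rfl | ⟨ψ, hψ, hψγ⟩) h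
    · exact Or.inr ⟨φ, hφ, h⟩
    obtain ⟨χ, hχ, hχprop⟩ := hcomp ψ hψ φ hφ
    exact Or.inr ⟨χ, hχ, hχprop β γ δ hψγ h⟩
  have K2 : ∀ x, Oa x → Ob x → False := by
    rintro x (rfl | ⟨φ, hφ, hφx⟩) hb
    · rcases hb with rfl | ⟨ψ, hψ, hψx⟩
      · exact hne rfl
      · exact hnopre ψ hψ hψx
    rcases hb with rfl | ⟨ψ, hψ, hψx⟩
    · exact hnoim φ hφ hφx
    obtain ⟨ψ', hψ', hiff⟩ := hinv ψ hψ
    obtain ⟨χ, hχ, hχprop⟩ := hcomp φ hφ ψ' hψ'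
    exact hnoim χ hχ (hχprop α x β hφx ((hiff β x).mp hψx))
  have K4a : ∀ φ ∈ Φ, ∀ γ δ, φ γ = some δ → Oa δ → Oa γ := by
    intro φ hφ γ δ h hδ
    obtain ⟨ψ, hψ, hiff⟩ := hinv φ hφ
    exact K3a ψ hψ δ γ hδ ((hiff γ δ).mp h)
  -- the extension
  set fq : Ordinal → Option (Fin 2) :=
    fun x => if Oa x then some 1 else if Ob x then some 0 else fp x with hfq
  have hfqOa : ∀ x, Oa x → fq x = some 1 := by
    intro x hx; simp only [hfq, if_pos hx]
  have hfqOb : ∀ x, Ob x → fq x = some 0 := by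
    intro x hx
    simp only [hfq, if_neg (fun h => K2 x h hx), if_pos hx]
  have hfqelse : ∀ x, ¬ Oa x → ¬ Ob x → fq x = fp x := by
    intro x h1 h2; simp only [hfq, if_neg h1, if_neg h2]
  have hext : ∀ x, fp x ≠ none → fq x = fp x := by
    intro x hx
    exact hfqelse x (fun h => hx (K1a x h)) (fun h => hx (K1b x h))
  refine ⟨α, β, hαX, hβX, hαfp, hβfp, hne,
    fun φ hφ => ⟨hnoim φ hφ, hnopre φ hφ⟩, fq, ?_, hext,
    hfqOa α (Or.inl rfl), hfqOb β (Or.inl rfl), ?_, ?_⟩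
  · -- finiteness of pdom fq
    refine Set.Finite.subset ((((hfp.union (Set.finite_singleton α)).union
      (hfinIm α)).union ((Set.finite_singleton β).union (hfinIm β))) ) ?_
    intro x hx
    by_cases h1 : Oa x
    · rcases h1 with rfl | ⟨φ, hφ, h⟩
      · exact Or.inl (Or.inl (Or.inr rfl))
      · exact Or.inl (Or.inr (Set.mem_biUnion hφ h))
    by_cases h2 : Ob x
    · rcases h2 with rfl | ⟨φ, hφ, h⟩
      · exact Or.inr (Or.inl rfl)
      · exact Or.inr (Or.inr (Set.mem_biUnion hφ h))
    · have hx' : fq x ≠ none := hx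
      have hfpx : fp x ≠ none := (hfqelse x h1 h2) ▸ hx'
      exact Or.inl (Or.inl (Or.inl hfpx))
  · -- characterization of the domain
    intro x
    constructor
    · intro hx
      by_cases h1 : Oa x
      · rcases h1 with rfl | ⟨φ, hφ, h⟩
        · exact Or.inr (Or.inl rfl)
        · exact Or.inr (Or.inr (Or.inr ⟨φ, hφ, Or.inl h⟩))
      by_cases h2 : Ob x
      · rcases h2 with rfl | ⟨φ, hφ, h⟩
        · exact Or.inr (Or.inr (Or.inl rfl))
        · exact Or.inr (Or.inr (Or.inr ⟨φ, hφ, Or.inr h⟩))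
      · exact Or.inl ((hfqelse x h1 h2) ▸ hx)
    · rintro (h | rfl | rfl | ⟨φ, hφ, h | h⟩)
      · rw [hext x h]; exact h
      · rw [hfqOa x (Or.inl rfl)]; exact Option.some_ne_none _
      · rw [hfqOb x (Or.inl rfl)]; exact Option.some_ne_none _
      · rw [hfqOa x (Or.inr ⟨φ, hφ, h⟩)]; exact Option.some_ne_none _
      · by_cases h1 : Oa x
        · rw [hfqOa x h1]; exact Option.some_ne_none _
        · rw [hfqOb x (Or.inr ⟨φ, hφ, h⟩)]; exact Option.some_ne_none _
  · -- coherence of fq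
    intro φ hφ γ δ hγ hφγ
    by_cases h1 : Oa γ
    · rw [hfqOa γ h1, hfqOa δ (K3a φ hφ γ δ h1 hφγ)]
    by_cases h2 : Ob γ
    · have hδa : ¬ Oa δ := fun h => h1 (K4a φ hφ γ δ hφγ h)
      rw [hfqOb γ h2, hfqOb δ (K3b φ hφ γ δ h2 hφγ)]
    · have hγfp : fp γ ≠ none := (hfqelse γ h1 h2) ▸ hγ
      have hδfp : fp δ ≠ none := fun h =>
        hγfp ((hcoh φ hφ γ δ hγfp hφγ).symm.trans h)
      rw [hfqelse γ h1 h2, hext δ hδfp, hcoh φ hφ γ δ hγfp hφγ]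
end
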